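/- arXiv:1704.01445 — 2 statements merged into one kernel-verified Lean document; each statement's English description precedes it below -/
import Mathlib

section
/- Fix a positive integer m and define the histogram kernel κ_m : [0,1] × [0,1] → ℝ by κ_m(x, x') = Σ_{j=0}^{m−1} 1[x ∈ [j/m, (j+1)/m)] · 1[x' ∈ [j/m, (j+1)/m)], and S(α) = α + (1 − α)·log(1 − α) (with the convention S(1) = 1). Then Σ_{k=1}^∞ Σ_{k'=1}^∞ (1/(k·k')) · ∫₀¹ ∫₀¹ x^k (x')^{k'} κ_m(x, x') dx dx' = Σ_{j=0}^{m−1} ( S((j+1)/m) − S(j/m) )², with the left-hand double series converging. -/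
/-!
The kernel is a sum over bins `[a, b)` of products `1[x ∈ [a,b)] 1[x' ∈ [a,b)]`, so each double
integral factors as a sum over bins of products of one-dimensional moments `∫_a^b x^{k+1} dx`, and
the weighted double series becomes a finite sum of products of nonnegative single series
`∑_k (b^{k+2} - a^{k+2}) / ((k+1)(k+2))`. By the partial fractions
`1/((k+1)(k+2)) = 1/(k+1) - 1/(k+2)` and `-log(1-α) = ∑ α^{n+1}/(n+1)`, one has
`∑_k α^{k+2} / ((k+1)(k+2)) = α + (1-α) log(1-α) = S(α)` for `|α| < 1`; at `α = 1` the series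
telescopes to `1 = S(1)`. Hence each single series equals `S(b) - S(a)`.
-/

open MeasureTheory Set Filter Finset

theorem hasSum_sub_succ_of_antitone {f : ℕ → ℝ} (hmono : Antitone f)
    (hf : Tendsto f atTop (nhds 0)) : HasSum (fun n => f n - f (n + 1)) (f 0) := by
  rw [hasSum_iff_tendsto_nat_of_nonneg fun n => sub_nonneg.2 (hmono n.le_succ)]
  simp_rw [Finset.sum_range_sub']
  simpa using hf.const_sub (f 0)

theorem hasSum_one_div_succ_mul_add_two :
    HasSum (fun k : ℕ => 1 / (((k : ℝ) + 1) * ((k : ℝ) + 2))) 1 := by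
  have hmono : Antitone fun k : ℕ => 1 / ((k : ℝ) + 1) := fun i j hij => by
    dsimp only
    gcongr
  convert hasSum_sub_succ_of_antitone hmono tendsto_one_div_add_atTop_nhds_zero_nat using 1
  · ext k
    push_cast
    field_simp
    ring
  · simp

theorem Real.hasSum_pow_add_two_div_of_abs_lt_one {α : ℝ} (h : |α| < 1) :
    HasSum (fun k : ℕ => α ^ (k + 2) / (((k : ℝ) + 1) * ((k : ℝ) + 2)))
      (α + (1 - α) * Real.log (1 - α)) := by
  have hlog := Real.hasSum_pow_div_log_of_abs_lt_one h
  have hshift : HasSum (fun k : ℕ => α ^ (k + 2) / ((k : ℝ) + 2)) (-Real.log (1 - α) - α) := by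
    simpa [add_assoc, one_add_one_eq_two] using (hasSum_nat_add_iff' 1).2 hlog
  have hterm (k : ℕ) : α ^ (k + 2) / (((k : ℝ) + 1) * ((k : ℝ) + 2)) =
      α * (α ^ (k + 1) / ((k : ℝ) + 1)) - α ^ (k + 2) / ((k : ℝ) + 2) := by
    field_simp
    ring
  simp_rw [hterm]
  rw [show α + (1 - α) * Real.log (1 - α) = α * -Real.log (1 - α) - (-Real.log (1 - α) - α) by
    ring]
  exact (hlog.mul_left α).sub hshift

theorem Real.hasSum_pow_add_two_div {α : ℝ} (h₀ : -1 < α) (h₁ : α ≤ 1) :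
    HasSum (fun k : ℕ => α ^ (k + 2) / (((k : ℝ) + 1) * ((k : ℝ) + 2)))
      (α + (1 - α) * Real.log (1 - α)) := by
  rcases h₁.eq_or_lt with rfl | h₁
  · simpa using hasSum_one_div_succ_mul_add_two
  · exact Real.hasSum_pow_add_two_div_of_abs_lt_one (abs_lt.2 ⟨h₀, h₁⟩)

theorem HasSum.mul_of_nonneg {ι ι' : Type*} {f : ι → ℝ} {g : ι' → ℝ} {a b : ℝ}
    (hf : HasSum f a) (hg : HasSum g b) (hf' : 0 ≤ f) (hg' : 0 ≤ g) :
    HasSum (fun p : ι × ι' => f p.1 * g p.2) (a * b) :=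
  hf.mul hg (hf.summable.mul_of_nonneg hg.summable hf' hg')

section Integrals

variable {E : Type*} [NormedAddCommGroup E] {μ : Measure ℝ}
  {f : ℝ → E} {a b c d : ℝ}

theorem IntervalIntegrable.indicator (hf : IntervalIntegrable f μ c d) {s : Set ℝ}
    (hs : MeasurableSet s) : IntervalIntegrable (s.indicator f) μ c d :=
  intervalIntegrable_iff.2 ((intervalIntegrable_iff.1 hf).indicator hs)

theorem intervalIntegral.integral_indicator_Ico [NormedSpace ℝ E] [NullSingletonClass μ]
    (hca : c ≤ a) (hab : a ≤ b) (hbd : b ≤ d) : ∫ x in c..d, (Ico a b).indicator f x ∂μ = ∫ x in a..b, f x ∂μ := by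
  have hsub : Ioc a b ∩ Ioc c d = Ioc a b :=
    inter_eq_left.2 (Ioc_subset_Ioc hca hbd)
  rw [intervalIntegral.integral_of_le (hca.trans (hab.trans hbd)),
    intervalIntegral.integral_of_le hab, MeasureTheory.integral_indicator measurableSet_Ico,
    Measure.restrict_restrict measurableSet_Ico,
    Measure.restrict_congr_set ((ae_eq_set_inter Ico_ae_eq_Ioc (ae_eq_refl _)).trans
      (Filter.EventuallyEq.of_eq hsub))]

end Integrals

theorem integral_integral_mul_sum_mul {ι : Type*} (s : Finset ι) {μ ν : Measure ℝ}
    {a b c d : ℝ} (f g : ℝ → ℝ) (u v : ι → ℝ → ℝ)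
    (hu : ∀ i ∈ s, IntervalIntegrable (fun x => f x * u i x) μ a b)
    (hv : ∀ i ∈ s, IntervalIntegrable (fun y => g y * v i y) ν c d) :
    ∫ y in c..d, ∫ x in a..b, f x * g y * ∑ i ∈ s, u i x * v i y ∂μ ∂ν =
      ∑ i ∈ s, (∫ x in a..b, f x * u i x ∂μ) * ∫ y in c..d, g y * v i y ∂ν := by
  have hinner (y : ℝ) : ∫ x in a..b, f x * g y * ∑ i ∈ s, u i x * v i y ∂μ =
      ∑ i ∈ s, (g y * v i y) * ∫ x in a..b, f x * u i x ∂μ := by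
    simp_rw [← intervalIntegral.integral_const_mul]
    rw [← intervalIntegral.integral_finsetSum fun i hi => (hu i hi).const_mul _]
    congr 1 with x
    rw [Finset.mul_sum]
    exact Finset.sum_congr rfl fun i _ => by ring
  simp_rw [hinner]
  rw [intervalIntegral.integral_finsetSum fun i hi => (hv i hi).mul_const _]
  refine Finset.sum_congr rfl fun i _ => ?_
  rw [intervalIntegral.integral_mul_const, mul_comm]

theorem mul_ite_one_zero_eq_indicator {α M : Type*} [MulZeroOneClass M] (s : Set α)
    [DecidablePred (· ∈ s)] (f : α → M) :
    (fun x => f x * if x ∈ s then 1 else 0) = s.indicator f := by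
  ext x
  rw [mul_ite, mul_one, mul_zero, Set.indicator_apply]

theorem intervalIntegrable_pow_mul_ite_mem_Ico (a b c d : ℝ) (n : ℕ) :
    IntervalIntegrable (fun x : ℝ => x ^ n * if x ∈ Ico a b then 1 else 0) volume c d := by
  rw [mul_ite_one_zero_eq_indicator _ (· ^ n)]
  exact (continuous_pow n).intervalIntegrable c d |>.indicator measurableSet_Ico

theorem integral_pow_mul_ite_mem_Ico {a b : ℝ} (ha : 0 ≤ a) (hab : a ≤ b) (hb : b ≤ 1)
    (n : ℕ) :
    ∫ x in (0 : ℝ)..1, x ^ n * (if x ∈ Ico a b then 1 else 0) =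
      (b ^ (n + 1) - a ^ (n + 1)) / (n + 1) := by
  rw [mul_ite_one_zero_eq_indicator _ (· ^ n), intervalIntegral.integral_indicator_Ico ha hab hb,
    integral_pow]

/-- `(1/(k+1)) ∫_a^b x^{k+1} dx`: the factor contributed by the bin `[a, b)` to the `k`-th term. -/
noncomputable def powIncrement (a b : ℝ) (k : ℕ) : ℝ :=
  (b ^ (k + 2) - a ^ (k + 2)) / (((k : ℝ) + 1) * ((k : ℝ) + 2))

theorem hasSum_powIncrement {a b : ℝ} (ha : a ∈ Set.Ioc (-1) 1) (hb : b ∈ Set.Ioc (-1) 1) :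
    HasSum (powIncrement a b)
      (b + (1 - b) * Real.log (1 - b) - (a + (1 - a) * Real.log (1 - a))) := by
  unfold powIncrement
  simpa only [sub_div] using
    (Real.hasSum_pow_add_two_div hb.1 hb.2).sub (Real.hasSum_pow_add_two_div ha.1 ha.2)

theorem powIncrement_nonneg {a b : ℝ} (ha : 0 ≤ a) (hab : a ≤ b) (k : ℕ) :
    0 ≤ powIncrement a b k :=
  div_nonneg (sub_nonneg.2 (pow_le_pow_left₀ ha hab _)) (by positivity)

theorem natCast_div_bounds_of_lt {i m : ℕ} (hi : i < m) :
    0 ≤ (i : ℝ) / m ∧ (i : ℝ) / m ≤ ((i : ℝ) + 1) / m ∧ ((i : ℝ) + 1) / m ≤ 1 := by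
  have hi' : (i : ℝ) + 1 ≤ m := by exact_mod_cast hi
  exact ⟨by positivity, by gcongr; linarith, div_le_one_of_le₀ hi' m.cast_nonneg⟩

theorem histogram_moment_integral_eq_sum (m : ℕ) (p : ℕ × ℕ) :
    (1 / (((p.1 : ℝ) + 1) * ((p.2 : ℝ) + 1))) *
      ∫ x' in (0 : ℝ)..1, ∫ x in (0 : ℝ)..1, x ^ (p.1 + 1) * x' ^ (p.2 + 1) *
        (∑ i ∈ Finset.range m,
          (if x ∈ Set.Ico ((i : ℝ) / m) (((i : ℝ) + 1) / m) then (1 : ℝ) else 0) *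
          (if x' ∈ Set.Ico ((i : ℝ) / m) (((i : ℝ) + 1) / m) then (1 : ℝ) else 0)) =
      ∑ i ∈ range m, powIncrement (i / m) ((i + 1) / m) p.1 *
        powIncrement (i / m) ((i + 1) / m) p.2 := by
  rw [integral_integral_mul_sum_mul _ _ _ _ _
    (fun i _ => intervalIntegrable_pow_mul_ite_mem_Ico _ _ _ _ _)
    (fun i _ => intervalIntegrable_pow_mul_ite_mem_Ico _ _ _ _ _), mul_sum]
  refine sum_congr rfl fun i hi => ?_
  obtain ⟨h₀, h₁, h₂⟩ := natCast_div_bounds_of_lt (mem_range.1 hi)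
  rw [integral_pow_mul_ite_mem_Ico h₀ h₁ h₂, integral_pow_mul_ite_mem_Ico h₀ h₁ h₂]
  generalize (i : ℝ) / m = a, ((i : ℝ) + 1) / m = b
  simp only [powIncrement]
  push_cast
  field_simp
  ring

theorem histogram_kernel_double_tsum_moment_integral_general (m : ℕ)
    (S : ℝ → ℝ) (hS : ∀ α : ℝ, S α = α + (1 - α) * Real.log (1 - α)) :
    Summable (fun p : ℕ × ℕ => (1 / (((p.1 : ℝ) + 1) * ((p.2 : ℝ) + 1))) *
      ∫ x' in (0 : ℝ)..1, ∫ x in (0 : ℝ)..1, x ^ (p.1 + 1) * x' ^ (p.2 + 1) *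
        (∑ i ∈ Finset.range m,
          (if x ∈ Set.Ico ((i : ℝ) / m) (((i : ℝ) + 1) / m) then (1 : ℝ) else 0) *
          (if x' ∈ Set.Ico ((i : ℝ) / m) (((i : ℝ) + 1) / m) then (1 : ℝ) else 0))) ∧
    ∑' p : ℕ × ℕ, (1 / (((p.1 : ℝ) + 1) * ((p.2 : ℝ) + 1))) *
      ∫ x' in (0 : ℝ)..1, ∫ x in (0 : ℝ)..1, x ^ (p.1 + 1) * x' ^ (p.2 + 1) *
        (∑ i ∈ Finset.range m,
          (if x ∈ Set.Ico ((i : ℝ) / m) (((i : ℝ) + 1) / m) then (1 : ℝ) else 0) *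
          (if x' ∈ Set.Ico ((i : ℝ) / m) (((i : ℝ) + 1) / m) then (1 : ℝ) else 0)) =
      ∑ j ∈ Finset.range m, (S (((j : ℝ) + 1) / m) - S ((j : ℝ) / m)) ^ 2 := by
  have hbin (i : ℕ) (hi : i ∈ range m) :
      HasSum (powIncrement (i / m) ((i + 1) / m)) (S (((i : ℝ) + 1) / m) - S ((i : ℝ) / m)) := by
    obtain ⟨h₀, h₁, h₂⟩ := natCast_div_bounds_of_lt (mem_range.1 hi)
    rw [hS, hS]
    exact hasSum_powIncrement ⟨by linarith, by linarith⟩ ⟨by linarith, h₂⟩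
  have hnonneg (i : ℕ) (hi : i ∈ range m) : 0 ≤ powIncrement (i / m) ((i + 1) / m) :=
    have ⟨h₀, h₁, _⟩ := natCast_div_bounds_of_lt (mem_range.1 hi)
    powIncrement_nonneg h₀ h₁
  have hsum := hasSum_sum fun i hi =>
    (hbin i hi).mul_of_nonneg (hbin i hi) (hnonneg i hi) (hnonneg i hi)
  simp only [← sq] at hsum
  simp only [histogram_moment_integral_eq_sum]
  exact ⟨hsum.summable, hsum.tsum_eq⟩

/-- Prior variance term `k_{*,*}` of the infinite weighted sum of raw moments under the
histogram kernel: the double series `∑_{k,k' ≥ 1} (1/(k k')) ∫∫ x^k x'^{k'} κ_m(x,x')`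
converges and equals `∑_j (S((j+1)/m) - S(j/m))²` with `S(α) = α + (1-α) log(1-α)`. -/
theorem histogram_kernel_double_tsum_moment_integral (m : ℕ) (hm : 0 < m)
    (S : ℝ → ℝ) (hS : ∀ α : ℝ, S α = α + (1 - α) * Real.log (1 - α)) :
    Summable (fun p : ℕ × ℕ => (1 / (((p.1 : ℝ) + 1) * ((p.2 : ℝ) + 1))) *
      ∫ x' in (0 : ℝ)..1, ∫ x in (0 : ℝ)..1, x ^ (p.1 + 1) * x' ^ (p.2 + 1) *
        (∑ i ∈ Finset.range m,
          (if x ∈ Set.Ico ((i : ℝ) / m) (((i : ℝ) + 1) / m) then (1 : ℝ) else 0) *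
          (if x' ∈ Set.Ico ((i : ℝ) / m) (((i : ℝ) + 1) / m) then (1 : ℝ) else 0))) ∧
    ∑' p : ℕ × ℕ, (1 / (((p.1 : ℝ) + 1) * ((p.2 : ℝ) + 1))) *
      ∫ x' in (0 : ℝ)..1, ∫ x in (0 : ℝ)..1, x ^ (p.1 + 1) * x' ^ (p.2 + 1) *
        (∑ i ∈ Finset.range m,
          (if x ∈ Set.Ico ((i : ℝ) / m) (((i : ℝ) + 1) / m) then (1 : ℝ) else 0) *
          (if x' ∈ Set.Ico ((i : ℝ) / m) (((i : ℝ) + 1) / m) then (1 : ℝ) else 0)) =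
      ∑ j ∈ Finset.range m, (S (((j : ℝ) + 1) / m) - S ((j : ℝ) / m)) ^ 2 :=
  histogram_kernel_double_tsum_moment_integral_general m S hS
end

section
/- Let ν ≥ 0 be a real number and m ≥ 1 an integer, let Γ denote the real Gamma function, and define the digamma function ψ(x) as the derivative at x of the function t ↦ log Γ(t). Then ∫₀¹ λ^{ν+1/2} · ( Σ_{j=m}^∞ λ^j / j ) dλ = ( ψ(m + ν + 3/2) − ψ(m) ) / ( ν + 3/2 ), where the inner series converges for every λ ∈ [0,1) and the integral is finite. -/
/-!
`ψ` is the derivative of the convex function `log ∘ Γ`, so it is monotone on `(0, ∞)`, and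
`Γ(x + 1) = x Γ(x)` gives `ψ(x + 1) = ψ(x) + 1/x`. Monotonicity squeezes `ψ(y + c) - ψ(y)` between
`0` and `ψ(y + ⌈c⌉) - ψ(y) = ∑_{k < ⌈c⌉} 1/(y + k) → 0`, and telescoping then yields
`ψ(x + c) - ψ(x) = ∑_k (1/(k + x) - 1/(k + x + c))`.

On the other side, all terms of `λ^{ν+1/2} ∑_{j ≥ m} λ^j/j` are nonnegative, so integrating
termwise gives `∑_j 1/((j + m)(j + m + ν + 3/2))`, which is the series above divided by `ν + 3/2`
(partial fractions, with `x = m` and `c = ν + 3/2`).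
-/

open Filter Finset MeasureTheory Set Topology Interval

namespace Real

/-- At the poles `0, -1, -2, …` this takes the junk value `0`. -/
noncomputable def digamma (x : ℝ) : ℝ := deriv (fun t => log (Gamma t)) x

variable {x c : ℝ}

lemma differentiableAt_log_Gamma (hx : 0 < x) :
    DifferentiableAt ℝ (fun t => log (Gamma t)) x :=
  (differentiableAt_Gamma fun n => ((neg_nonpos.2 n.cast_nonneg).trans_lt hx).ne').log
    (Gamma_pos_of_pos hx).ne'

lemma digamma_add_one (hx : 0 < x) : digamma (x + 1) = digamma x + x⁻¹ := by
  have hrec : ∀ y : ℝ, 0 < y → log (Gamma (y + 1)) = log (Gamma y) + log y := fun y hy => by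
    rw [Gamma_add_one hy.ne', log_mul hy.ne' (Gamma_pos_of_pos hy).ne', add_comm]
  rw [digamma, digamma, ← deriv_comp_add_const, ← deriv_log,
    ← deriv_add (differentiableAt_log_Gamma hx) (differentiableAt_log hx.ne')]
  apply EventuallyEq.deriv_eq
  filter_upwards [eventually_gt_nhds hx] using hrec

lemma digamma_add_nat (hx : 0 < x) (n : ℕ) :
    digamma (x + n) = digamma x + ∑ k ∈ range n, (k + x)⁻¹ := by
  induction n with
  | zero => simp
  | succ n ih =>
    rw [Nat.cast_succ, ← add_assoc, digamma_add_one (by positivity), ih, sum_range_succ,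
      add_comm x n, add_assoc]

lemma monotoneOn_digamma : MonotoneOn digamma (Ioi 0) :=
  convexOn_log_Gamma.monotoneOn_deriv fun _ hx => differentiableAt_log_Gamma hx

lemma tendsto_digamma_add_sub_digamma (hc : 0 ≤ c) :
    Tendsto (fun y => digamma (y + c) - digamma y) atTop (𝓝 0) := by
  have hmono : ∀ y > 0, ∀ z ≥ y, digamma y ≤ digamma z := fun y hy z hz =>
    monotoneOn_digamma hy (hy.trans_le hz) hz
  have hnonneg : ∀ᶠ y in atTop, 0 ≤ digamma (y + c) - digamma y := by
    filter_upwards [eventually_gt_atTop 0] with y hy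
    linarith [hmono y hy (y + c) (by linarith)]
  have hbound : ∀ᶠ y in atTop,
      digamma (y + c) - digamma y ≤ ∑ k ∈ range ⌈c⌉₊, (k + y)⁻¹ := by
    filter_upwards [eventually_gt_atTop 0] with y hy
    have := hmono (y + c) (by linarith) (y + ⌈c⌉₊) (by gcongr; exact Nat.le_ceil c)
    rw [digamma_add_nat hy] at this
    linarith
  have hlim : Tendsto (fun y => ∑ k ∈ range ⌈c⌉₊, ((k : ℝ) + y)⁻¹) atTop (𝓝 0) := by
    simpa using tendsto_finsetSum (range ⌈c⌉₊) fun (k : ℕ) _ =>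
      tendsto_inv_atTop_zero.comp (tendsto_atTop_add_const_left _ (k : ℝ) tendsto_id)
  exact tendsto_of_tendsto_of_tendsto_of_le_of_le' tendsto_const_nhds hlim hnonneg hbound

lemma hasSum_digamma_add_sub_digamma (hx : 0 < x) (hc : 0 ≤ c) :
    HasSum (fun k : ℕ => (k + x)⁻¹ - (k + x + c)⁻¹) (digamma (x + c) - digamma x) := by
  have hterm : ∀ k : ℕ, 0 ≤ (k + x)⁻¹ - (k + x + c)⁻¹ := fun k =>
    sub_nonneg.2 (inv_anti₀ (by positivity) (by linarith))
  rw [hasSum_iff_tendsto_nat_of_nonneg hterm]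
  have hpartial : ∀ n : ℕ, ∑ k ∈ range n, ((k + x)⁻¹ - (k + x + c)⁻¹) =
      (digamma (x + c) - digamma x) - (digamma (x + n + c) - digamma (x + n)) := by
    intro n
    rw [sum_sub_distrib, digamma_add_nat hx, add_right_comm, digamma_add_nat (by linarith)]
    simp only [add_assoc]
    ring
  simp only [hpartial]
  simpa using tendsto_const_nhds.sub ((tendsto_digamma_add_sub_digamma hc).comp
    (tendsto_atTop_add_const_left _ x tendsto_natCast_atTop_atTop))

lemma hasSum_inv_mul_digamma (hx : 0 < x) (hc : 0 < c) :
    HasSum (fun k : ℕ => ((k + x) * (k + x + c))⁻¹) ((digamma (x + c) - digamma x) / c) := by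
  refine ((hasSum_digamma_add_sub_digamma hx hc.le).div_const c).congr_fun fun k => ?_
  have : (0 : ℝ) < k + x := by positivity
  field_simp
  ring

end Real

section
variable {a : ℝ}

lemma integral_rpow_mul_pow (ha : -1 < a) (n : ℕ) :
    ∫ l in (0 : ℝ)..1, l ^ a * l ^ n = (n + (a + 1))⁻¹ := by
  have hpow : ∀ᵐ l ∂volume, l ∈ Ι (0 : ℝ) 1 → l ^ a * l ^ n = l ^ (a + n) :=
    ae_of_all _ fun l hl =>
      (Real.rpow_add_natCast (uIoc_of_le (zero_le_one' ℝ) ▸ hl).1.ne' a n).symm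
  have hexp : -1 < a + n := by linarith [n.cast_nonneg (α := ℝ)]
  rw [intervalIntegral.integral_congr_ae hpow, integral_rpow (Or.inl hexp),
    Real.one_rpow, Real.zero_rpow (by linarith)]
  ring

lemma integral_rpow_mul_pow_div (ha : -1 < a) (n : ℕ) :
    ∫ l in (0 : ℝ)..1, l ^ a * (l ^ n / n) = (n * (n + (a + 1)))⁻¹ := by
  simp_rw [mul_div_assoc', intervalIntegral.integral_div, integral_rpow_mul_pow ha, mul_inv,
    div_eq_mul_inv, mul_comm]

lemma summable_pow_add_div {l : ℝ} (hl₀ : 0 ≤ l) (hl₁ : l < 1) (m : ℕ) :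
    Summable fun j : ℕ => l ^ (j + m) / ((j : ℝ) + m) := by
  refine ((summable_geometric_of_lt_one hl₀ hl₁).mul_left (l ^ m)).of_nonneg_of_le
    (fun j => by positivity) fun j => ?_
  rw [← pow_add, add_comm m, div_eq_mul_inv]
  have : ((j : ℝ) + m)⁻¹ ≤ 1 := by exact_mod_cast Nat.cast_inv_le_one (j + m)
  exact mul_le_of_le_one_right (by positivity) this

lemma hasSum_integral_rpow_mul_tsum_pow_div (ha : -1 < a) {m : ℕ} (hm : 0 < m) :
    HasSum (fun j : ℕ => (((j : ℝ) + m) * ((j : ℝ) + m + (a + 1)))⁻¹)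
      (∫ l in (0 : ℝ)..1, l ^ a * ∑' j : ℕ, l ^ (j + m) / ((j : ℝ) + m)) := by
  have ha' : 0 < a + 1 := by linarith
  set F : ℕ → ℝ → ℝ := fun j l => l ^ a * (l ^ (j + m) / ((j : ℝ) + m))
  have hF_int : ∀ j, IntervalIntegrable (F j) volume 0 1 := fun j =>
    (intervalIntegral.intervalIntegrable_rpow' ha).mul_continuousOn (by fun_prop)
  have hF_integral : ∀ j, ∫ l in (0 : ℝ)..1, F j l = (((j : ℝ) + m) * ((j : ℝ) + m + (a + 1)))⁻¹ :=
    fun j => by simpa [F] using integral_rpow_mul_pow_div ha (j + m)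
  have hF_norm : ∀ j, ∫ l in Ioc (0 : ℝ) 1, ‖F j l‖ = ∫ l in Ioc (0 : ℝ) 1, F j l := fun j =>
    setIntegral_congr_fun measurableSet_Ioc fun l hl =>
      Real.norm_of_nonneg (have := hl.1.le; by positivity)
  have hsum : Summable fun j : ℕ => (((j : ℝ) + m) * ((j : ℝ) + m + (a + 1)))⁻¹ := by
    refine ((summable_nat_add_iff m).2 (Real.summable_nat_pow_inv.2 one_lt_two)).of_nonneg_of_le
      (fun j => by positivity) fun j => ?_
    have hjm : (0 : ℝ) < j + m := by positivity
    push_cast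
    exact inv_anti₀ (by positivity) (sq (_ : ℝ) ▸ mul_le_mul_of_nonneg_left (by linarith) hjm.le)
  have hswap := hasSum_integral_of_summable_integral_norm (fun j => (hF_int j).1)
    (hsum.congr fun j => by
      rw [hF_norm, ← intervalIntegral.integral_of_le zero_le_one, hF_integral])
  simpa only [← intervalIntegral.integral_of_le zero_le_one, hF_integral, F, tsum_mul_left]
    using hswap

end

/-- Expected absolute Taylor truncation error for a `ν`-continuous kernel: with `ψ` the
digamma function (derivative of `log ∘ Γ`), for `ν ≥ 0` and `m ≥ 1`,
`∫₀¹ λ^{ν+1/2} ∑_{j ≥ m} λ^j/j dλ = (ψ(m+ν+3/2) - ψ(m)) / (ν+3/2)`,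
the inner series converging on `[0,1)` and the integrand being integrable. -/
theorem taylor_truncation_expected_error (ν : ℝ) (hν : 0 ≤ ν) (m : ℕ) (hm : 1 ≤ m)
    (ψ : ℝ → ℝ) (hψ : ∀ x : ℝ, ψ x = deriv (fun t : ℝ => Real.log (Real.Gamma t)) x) :
    (∀ l ∈ Set.Ico (0 : ℝ) 1, Summable (fun j : ℕ => l ^ (j + m) / ((j : ℝ) + (m : ℝ)))) ∧
    IntervalIntegrable
      (fun l : ℝ => l ^ (ν + 1 / 2) * ∑' j : ℕ, l ^ (j + m) / ((j : ℝ) + (m : ℝ)))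
      MeasureTheory.volume 0 1 ∧
    ∫ l in (0 : ℝ)..1, l ^ (ν + 1 / 2) * ∑' j : ℕ, l ^ (j + m) / ((j : ℝ) + (m : ℝ)) =
      (ψ ((m : ℝ) + ν + 3 / 2) - ψ (m : ℝ)) / (ν + 3 / 2) := by
  have hm₀ : 0 < m := hm
  have hc : ν + 3 / 2 = ν + 1 / 2 + 1 := by ring
  have hintegral := hasSum_integral_rpow_mul_tsum_pow_div (a := ν + 1 / 2) (by linarith) hm₀
  have hdigamma := Real.hasSum_inv_mul_digamma (x := m) (c := ν + 1 / 2 + 1)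
    (by exact_mod_cast hm₀) (by linarith)
  have hpos := hintegral.summable.tsum_pos (fun j => by positivity) 0 (by positivity)
  -- A non-integrable function has integral `0`, so a positive integral certifies integrability.
  refine ⟨fun l hl => summable_pow_add_div hl.1 hl.2 m,
    intervalIntegral.intervalIntegrable_of_integral_ne_zero (hintegral.tsum_eq ▸ hpos).ne', ?_⟩
  rw [hintegral.unique hdigamma, hψ, hψ, ← hc, ← add_assoc]
  rfl
end
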